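/- With A = Z/2[x_1,x_2,y_1,y_2], Sq the ring endomorphism sending each variable v to v + v^2, t_2 = x_1^2+x_1x_2+x_2^2, t_3 = x_1x_2(x_1+x_2), and s_1 = t_3 y_2 + t_2 y_2^2 + y_2^4: the homogeneous component of Sq(s_1) in degree 5 is 0 and the homogeneous component of Sq(s_1) in degree 6 is t_2 · s_1. -/

import Mathlib

open MvPolynomial

noncomputable section

abbrev A10 := MvPolynomial (Fin 4) (ZMod 2)

def x₁ : A10 := X 0
def x₂ : A10 := X 1
def y₂ : A10 := X 3
def t₂ : A10 := x₁ ^ 2 + x₁ * x₂ + x₂ ^ 2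
def t₃ : A10 := x₁ * x₂ * (x₁ + x₂)
def s₁ : A10 := t₃ * y₂ + t₂ * y₂ ^ 2 + y₂ ^ 4

def Sq : A10 →ₐ[ZMod 2] A10 := aeval (fun i => X i + X i ^ 2)

/-!
`s₁ = ∏ (y₂ + ℓ)` over the linear forms `ℓ ∈ ⟨x₁, x₂⟩`, and the elementary symmetric functions of
these four factors are `0, t₂, t₃, s₁`. In characteristic `2`, `Sq v = v (1 + v)` for every linear
form `v`, so `Sq s₁ = s₁ ∏ (1 + y₂ + ℓ) = s₁ (1 + t₂ + t₃ + s₁)`. As `t₂, t₃, s₁` are homogeneous of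
degrees `2, 3, 4`, the components of `Sq s₁` in degrees `4, …, 8` are `s₁, 0, t₂ s₁, t₃ s₁, s₁²`.
-/

lemma Sq_X (i : Fin 4) : Sq (X i) = X i + X i ^ 2 := aeval_X _ _

lemma Sq_t₂ : Sq t₂ = t₂ + t₃ + t₂ ^ 2 := by
  simp only [t₂, t₃, x₁, x₂, map_add, map_mul, map_pow, Sq_X]
  grind

lemma Sq_t₃ : Sq t₃ = t₃ * (1 + t₂ + t₃) := by
  simp only [t₂, t₃, x₁, x₂, map_add, map_mul, Sq_X]
  grind

lemma Sq_s₁ : Sq s₁ = s₁ * (1 + t₂ + t₃ + s₁) := by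
  rw [s₁]
  simp only [map_add, map_mul, map_pow, Sq_t₂, Sq_t₃, y₂, Sq_X]
  grind

lemma isHomogeneous_t₂ : t₂.IsHomogeneous 2 :=
  (((isHomogeneous_X _ 0).pow 2).add ((isHomogeneous_X _ 0).mul (isHomogeneous_X _ 1))).add
    ((isHomogeneous_X _ 1).pow 2)

lemma isHomogeneous_t₃ : t₃.IsHomogeneous 3 :=
  ((isHomogeneous_X _ 0).mul (isHomogeneous_X _ 1)).mul
    ((isHomogeneous_X _ 0).add (isHomogeneous_X _ 1))

lemma isHomogeneous_s₁ : s₁.IsHomogeneous 4 :=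
  ((isHomogeneous_t₃.mul (isHomogeneous_X _ 3)).add
    (isHomogeneous_t₂.mul ((isHomogeneous_X _ 3).pow 2))).add ((isHomogeneous_X _ 3).pow 4)

/-- `Sq¹ s₁ = 0` and `Sq² s₁ = t₂ s₁`: the degree-5 homogeneous component of `Sq s₁` is `0`
and the degree-6 homogeneous component of `Sq s₁` is `t₂ · s₁`. -/
theorem stmt_10 :
    homogeneousComponent 5 (Sq s₁) = 0 ∧ homogeneousComponent 6 (Sq s₁) = t₂ * s₁ := by
  have hSq : Sq s₁ = s₁ + t₂ * s₁ + t₃ * s₁ + s₁ ^ 2 := by rw [Sq_s₁]; ring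
  simp only [hSq, map_add,
    homogeneousComponent_of_mem isHomogeneous_s₁,
    homogeneousComponent_of_mem (isHomogeneous_t₂.mul isHomogeneous_s₁),
    homogeneousComponent_of_mem (isHomogeneous_t₃.mul isHomogeneous_s₁),
    homogeneousComponent_of_mem (isHomogeneous_s₁.pow 2)]
  norm_num

end
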